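/- arXiv:1105.3053 — 2 statements merged into one kernel-verified Lean document; each statement's English description precedes it below -/
import Mathlib

section
/- Let ξ₁,…,ξ_k be vectors in ℝ^d in general position ((i): no d linearly dependent; (ii): no ω with ⟨ω,ξᵢ⟩ > 0 for all i), with spread characteristics κ₁, κ₂. For a vector z ∈ ℝ^d with strictly positive coordinates, let δ(z) = maxᵢ z^i / minᵢ z^i, and let κ₁(z), κ₂(z) denote the corresponding characteristics of the coordinate-wise rescaled family {z∘ξ₁,…,z∘ξ_k} (where (z∘ξ)^i = z^i ξ^i). Then κ₁(z) ≥ |z| κ₁ / (d δ(z)) and κ₂(z) ≥ |z| κ₂ / (√d δ(z)). -/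
noncomputable section

/-- Standard inner product on ℝ^n. -/
def dotp {n : ℕ} (u v : Fin n → ℝ) : ℝ := ∑ i, u i * v i

/-- Euclidean norm on ℝ^n. -/
def euclNorm {n : ℕ} (u : Fin n → ℝ) : ℝ := Real.sqrt (∑ i, (u i) ^ 2)

/-- Euclidean distance from the origin to the affine subspace spanned by the set `s`. -/
def distOrigAffine {n : ℕ} (s : Set (Fin n → ℝ)) : ℝ :=
  sInf (euclNorm '' (affineSpan ℝ s : Set (Fin n → ℝ)))

/-- κ₁: the minimum, over subfamilies I not satisfying condition (ii), of the largest κ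
such that some unit vector ω satisfies ⟨ξᵢ,ω⟩ ≥ κ for all i ∈ I. -/
def kappa1 (k n : ℕ) (ξ : Fin k → (Fin n → ℝ)) : ℝ :=
  sInf { c : ℝ | ∃ I : Finset (Fin k), I.Nonempty ∧
    (∃ ω, ∀ i ∈ I, 0 < dotp ω (ξ i)) ∧
    IsGreatest { κ : ℝ | ∃ ω, euclNorm ω = 1 ∧ ∀ i ∈ I, κ ≤ dotp (ξ i) ω } c }

/-- κ₂: the minimum, over subfamilies of size n, of the distance from the origin to the
affine hyperplane through their endpoints. -/
def kappa2 (k n : ℕ) (ξ : Fin k → (Fin n → ℝ)) : ℝ :=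
  sInf { c : ℝ | ∃ I : Finset (Fin k), I.card = n ∧ c = distOrigAffine (ξ '' I) }

/-!
With `m = min zⱼ` and `M = max zⱼ`, rescaling by `z` multiplies every Euclidean length by
at least `m`. A unit direction `ω` realising the margin `κ` of a subfamily of `ξ` yields the
direction `ω / z`, of length at most `1 / m`, realising margin `κ` for `z ∘ ξ`; after
normalisation the margin of `z ∘ ξ` is at least `m κ`. Likewise every point of the affine span
of `z ∘ ξ_I` is `z ∘ p` for a point `p` of the affine span of `ξ_I`, so its norm is at least
`m |p|`. Thus `κᵢ(z) ≥ m κᵢ`, and `m ≥ |z| / (√d δ(z)) ≥ |z| / (d δ(z))` since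
`|z| ≤ √d M`.
-/

lemma mul_csInf_le_csInf {S T : Set ℝ} {a : ℝ} (ha : 0 ≤ a) (hS : ∀ s ∈ S, 0 ≤ s)
    (hST : S.Nonempty → T.Nonempty) (h : ∀ t ∈ T, ∃ s ∈ S, a * s ≤ t) :
    a * sInf S ≤ sInf T := by
  rcases T.eq_empty_or_nonempty with rfl | hT
  · have hS' : S = ∅ := Set.not_nonempty_iff_eq_empty.1 fun hS' => (hST hS').ne_empty rfl
    simp [hS']
  refine le_csInf hT fun t ht => ?_
  obtain ⟨s, hs, hst⟩ := h t ht
  exact (mul_le_mul_of_nonneg_left (csInf_le ⟨0, hS⟩ hs) ha).trans hst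

lemma div_mul_div_le_of_le_mul {a b M m : ℝ} (ha : 0 ≤ a) (hm : 0 ≤ m) (h : a ≤ b * M) :
    a / (b * (M / m)) ≤ m := by
  rcases hm.eq_or_lt with rfl | hm
  · simp
  rcases le_or_gt (b * (M / m)) 0 with hb | hb
  · exact (div_nonpos_of_nonneg_of_nonpos ha hb).trans hm.le
  rw [div_le_iff₀ hb]
  calc a ≤ b * M := h
    _ = m * (b * (M / m)) := by field_simp

lemma sqrt_natCast_le_self (n : ℕ) : Real.sqrt n ≤ n := by
  rcases n.eq_zero_or_pos with rfl | hn
  · simp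
  · exact Real.sqrt_le_self_iff.2 (Or.inr (Nat.one_le_cast.2 hn))

section EuclideanNorm

variable {n : ℕ}

lemma euclNorm_eq_norm (u : Fin n → ℝ) :
    euclNorm u = ‖(WithLp.toLp 2 u : EuclideanSpace ℝ (Fin n))‖ := by
  simp [euclNorm, EuclideanSpace.norm_eq]

lemma euclNorm_nonneg (u : Fin n → ℝ) : 0 ≤ euclNorm u := Real.sqrt_nonneg _

lemma euclNorm_smul (c : ℝ) (u : Fin n → ℝ) : euclNorm (c • u) = |c| * euclNorm u := by
  simp only [euclNorm_eq_norm, WithLp.toLp_smul, norm_smul, Real.norm_eq_abs]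

lemma euclNorm_pos {u : Fin n → ℝ} (hu : u ≠ 0) : 0 < euclNorm u := by
  simpa [euclNorm_eq_norm] using hu

lemma euclNorm_inv_smul_self {u : Fin n → ℝ} (hu : u ≠ 0) :
    euclNorm ((euclNorm u)⁻¹ • u) = 1 := by
  rw [euclNorm_smul, abs_inv, abs_of_nonneg (euclNorm_nonneg u),
    inv_mul_cancel₀ (euclNorm_pos hu).ne']

lemma euclNorm_le_euclNorm {u v : Fin n → ℝ} (h : ∀ j, |u j| ≤ |v j|) :
    euclNorm u ≤ euclNorm v :=
  Real.sqrt_le_sqrt <| Finset.sum_le_sum fun j _ => sq_le_sq.2 (h j)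

lemma euclNorm_le_sqrt_card_mul {u : Fin n → ℝ} {M : ℝ} (hM0 : 0 ≤ M)
    (hM : ∀ j, |u j| ≤ M) : euclNorm u ≤ Real.sqrt n * M := by
  calc euclNorm u ≤ euclNorm (fun _ : Fin n => M) :=
        euclNorm_le_euclNorm fun j => (hM j).trans (le_abs_self M)
    _ = Real.sqrt n * M := by
        simp [euclNorm, Real.sqrt_mul (Nat.cast_nonneg n), Real.sqrt_sq hM0]

lemma mul_euclNorm_le_euclNorm_mul {z : Fin n → ℝ} {m : ℝ} (hm0 : 0 ≤ m)
    (hm : ∀ j, m ≤ z j) (w : Fin n → ℝ) : m * euclNorm w ≤ euclNorm (z * w) := by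
  rw [← abs_of_nonneg hm0, ← euclNorm_smul]
  refine euclNorm_le_euclNorm fun j => ?_
  simp only [Pi.smul_apply, Pi.mul_apply, smul_eq_mul, abs_mul]
  exact mul_le_mul_of_nonneg_right (abs_le_abs_of_nonneg hm0 (hm j)) (abs_nonneg _)

lemma dotp_comm (u v : Fin n → ℝ) : dotp u v = dotp v u := dotProduct_comm u v

lemma dotp_smul (c : ℝ) (u v : Fin n → ℝ) : dotp u (c • v) = c * dotp u v :=
  dotProduct_smul c u v

lemma continuous_dotp (u : Fin n → ℝ) : Continuous (dotp u) :=
  continuous_const.dotProduct continuous_id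

lemma dotp_mul_left (z u v : Fin n → ℝ) : dotp (z * u) v = dotp u (z * v) :=
  Finset.sum_congr rfl fun j _ => by simp only [Pi.mul_apply]; ring

end EuclideanNorm

section Margins

variable {k n : ℕ}

def HasPositiveDirection (ξ : Fin k → Fin n → ℝ) (I : Finset (Fin k)) : Prop :=
  ∃ ω, ∀ i ∈ I, 0 < dotp ω (ξ i)

def marginSet (ξ : Fin k → Fin n → ℝ) (I : Finset (Fin k)) : Set ℝ :=
  { κ | ∃ ω, euclNorm ω = 1 ∧ ∀ i ∈ I, κ ≤ dotp (ξ i) ω }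

lemma hasPositiveDirection_mul_iff {ξ : Fin k → Fin n → ℝ} {I : Finset (Fin k)}
    {z : Fin n → ℝ} (hz : ∀ j, z j ≠ 0) :
    HasPositiveDirection (fun i => z * ξ i) I ↔ HasPositiveDirection ξ I := by
  have hz_mul_div : ∀ ω : Fin n → ℝ, z * (ω / z) = ω := fun ω =>
    funext fun j => mul_div_cancel₀ (ω j) (hz j)
  constructor
  · rintro ⟨ω, hω⟩
    exact ⟨z * ω, fun i hi => (dotp_mul_left z ω (ξ i)).symm ▸ hω i hi⟩
  · rintro ⟨ω, hω⟩
    refine ⟨ω / z, fun i hi => ?_⟩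
    rw [← dotp_mul_left, hz_mul_div]
    exact hω i hi

lemma HasPositiveDirection.exists_unit {ξ : Fin k → Fin n → ℝ} {I : Finset (Fin k)}
    (h : HasPositiveDirection ξ I) (hI : I.Nonempty) :
    ∃ ω, euclNorm ω = 1 ∧ ∀ i ∈ I, 0 < dotp (ξ i) ω := by
  obtain ⟨ω, hω⟩ := h
  obtain ⟨i₀, hi₀⟩ := hI
  have hω0 : ω ≠ 0 := by
    rintro rfl
    simpa [dotp] using hω i₀ hi₀
  refine ⟨(euclNorm ω)⁻¹ • ω, euclNorm_inv_smul_self hω0, fun i hi => ?_⟩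
  rw [dotp_smul, dotp_comm]
  exact mul_pos (inv_pos.2 (euclNorm_pos hω0)) (hω i hi)

lemma exists_isGreatest_marginSet {ξ : Fin k → Fin n → ℝ} {I : Finset (Fin k)}
    (h : HasPositiveDirection ξ I) (hI : I.Nonempty) :
    ∃ c, IsGreatest (marginSet ξ I) c := by
  obtain ⟨ω₀, hω₀, -⟩ := h.exists_unit hI
  let margin : EuclideanSpace ℝ (Fin n) → ℝ := fun x => I.inf' hI fun i => dotp (ξ i) x.ofLp
  have hcont : Continuous margin := Continuous.finset_inf'_apply hI fun i _ =>
    (continuous_dotp (ξ i)).comp (PiLp.continuous_ofLp 2 _)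
  obtain ⟨x, hx, hmax⟩ := (isCompact_sphere (0 : EuclideanSpace ℝ (Fin n)) 1).exists_isMaxOn
    ⟨WithLp.toLp 2 ω₀, by simpa [← euclNorm_eq_norm] using hω₀⟩ hcont.continuousOn
  refine ⟨margin x, ⟨x.ofLp, ?_, fun i hi => Finset.inf'_le _ hi⟩, ?_⟩
  · simpa [euclNorm_eq_norm] using hx
  · rintro κ ⟨ω, hω, hκ⟩
    calc κ ≤ margin (WithLp.toLp 2 ω) := Finset.le_inf' _ _ hκ
      _ ≤ margin x := hmax (by simpa [← euclNorm_eq_norm] using hω)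

lemma pos_of_isGreatest_marginSet {ξ : Fin k → Fin n → ℝ} {I : Finset (Fin k)} {c : ℝ}
    (h : HasPositiveDirection ξ I) (hI : I.Nonempty) (hc : IsGreatest (marginSet ξ I) c) :
    0 < c := by
  obtain ⟨ω, hω, hpos⟩ := h.exists_unit hI
  exact ((Finset.lt_inf'_iff hI).2 hpos).trans_le
    (hc.2 ⟨ω, hω, fun i hi => Finset.inf'_le _ hi⟩)

lemma mul_mem_marginSet_mul {ξ : Fin k → Fin n → ℝ} {I : Finset (Fin k)} {z : Fin n → ℝ}
    {m M : ℝ} (hz : ∀ j, 0 < z j) (hm0 : 0 ≤ m) (hm : ∀ j, m ≤ z j)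
    (hM : M ∈ marginSet ξ I) (hM0 : 0 ≤ M) : m * M ∈ marginSet (fun i => z * ξ i) I := by
  obtain ⟨ω, hω, hMω⟩ := hM
  set w := ω / z
  have hzw : z * w = ω := funext fun j => mul_div_cancel₀ (ω j) (hz j).ne'
  have hw0 : w ≠ 0 := by
    rintro hw
    simp [← hzw, hw, euclNorm] at hω
  have hmw : m * euclNorm w ≤ 1 := hω ▸ hzw ▸ mul_euclNorm_le_euclNorm_mul hm0 hm w
  refine ⟨(euclNorm w)⁻¹ • w, euclNorm_inv_smul_self hw0, fun i hi => ?_⟩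
  rw [dotp_smul, dotp_comm, ← dotp_mul_left, hzw, dotp_comm,
    le_inv_mul_iff₀' (euclNorm_pos hw0)]
  calc m * M * euclNorm w = (m * euclNorm w) * M := by ring
    _ ≤ M := mul_le_of_le_one_left hM0 hmw
    _ ≤ dotp (ξ i) ω := hMω i hi

end Margins

section Kappa

variable {k n : ℕ}

lemma nonneg_of_mem_kappa1_set {ξ : Fin k → Fin n → ℝ} {c : ℝ}
    (hc : c ∈ { c : ℝ | ∃ I : Finset (Fin k), I.Nonempty ∧ HasPositiveDirection ξ I ∧
      IsGreatest (marginSet ξ I) c }) : 0 ≤ c :=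
  let ⟨_, hI, hpos, hc⟩ := hc
  (pos_of_isGreatest_marginSet hpos hI hc).le

lemma kappa1_nonneg (ξ : Fin k → Fin n → ℝ) : 0 ≤ kappa1 k n ξ :=
  Real.sInf_nonneg fun _ => nonneg_of_mem_kappa1_set

lemma mul_kappa1_le_kappa1_mul (ξ : Fin k → Fin n → ℝ) {z : Fin n → ℝ} {m : ℝ}
    (hz : ∀ j, 0 < z j) (hm0 : 0 ≤ m) (hm : ∀ j, m ≤ z j) :
    m * kappa1 k n ξ ≤ kappa1 k n (fun i => z * ξ i) := by
  have hpos_iff {I} := hasPositiveDirection_mul_iff (ξ := ξ) (I := I) fun j => (hz j).ne'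
  refine mul_csInf_le_csInf hm0 (fun _ => nonneg_of_mem_kappa1_set) ?_ ?_
  · rintro ⟨_, I, hI, hpos, -⟩
    obtain ⟨c, hc⟩ := exists_isGreatest_marginSet (hpos_iff.2 hpos) hI
    exact ⟨c, I, hI, hpos_iff.2 hpos, hc⟩
  · rintro c ⟨I, hI, hpos, hc⟩
    obtain ⟨M, hM⟩ := exists_isGreatest_marginSet (hpos_iff.1 hpos) hI
    have hM0 := pos_of_isGreatest_marginSet (hpos_iff.1 hpos) hI hM
    exact ⟨M, ⟨I, hI, hpos_iff.1 hpos, hM⟩,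
      hc.2 (mul_mem_marginSet_mul hz hm0 hm hM.1 hM0.le)⟩

lemma distOrigAffine_nonneg (s : Set (Fin n → ℝ)) : 0 ≤ distOrigAffine s :=
  Real.sInf_nonneg <| Set.forall_mem_image.2 fun q _ => euclNorm_nonneg q

lemma distOrigAffine_le_euclNorm {s : Set (Fin n → ℝ)} {p : Fin n → ℝ}
    (hp : p ∈ affineSpan ℝ s) : distOrigAffine s ≤ euclNorm p :=
  csInf_le ⟨0, Set.forall_mem_image.2 fun q _ => euclNorm_nonneg q⟩ ⟨p, hp, rfl⟩

lemma mul_distOrigAffine_le {z : Fin n → ℝ} {m : ℝ} (hm0 : 0 ≤ m) (hm : ∀ j, m ≤ z j)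
    (s : Set (Fin n → ℝ)) : m * distOrigAffine s ≤ distOrigAffine ((z * ·) '' s) := by
  rcases s.eq_empty_or_nonempty with rfl | ⟨p₀, hp₀⟩
  · simp [distOrigAffine]
  have hspan : (affineSpan ℝ ((z * ·) '' s) : Set (Fin n → ℝ)) =
      (z * ·) '' affineSpan ℝ s := by
    change _ = ⇑(LinearMap.mulLeft ℝ z).toAffineMap '' _
    rw [← AffineSubspace.coe_map, AffineSubspace.map_span]
    rfl
  refine le_csInf ⟨_, z * p₀, subset_affineSpan ℝ _ ⟨p₀, hp₀, rfl⟩, rfl⟩ ?_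
  rw [hspan]
  rintro _ ⟨_, ⟨p, hp, rfl⟩, rfl⟩
  calc m * distOrigAffine s ≤ m * euclNorm p :=
        mul_le_mul_of_nonneg_left (distOrigAffine_le_euclNorm hp) hm0
    _ ≤ euclNorm (z * p) := mul_euclNorm_le_euclNorm_mul hm0 hm p

lemma kappa2_nonneg (ξ : Fin k → Fin n → ℝ) : 0 ≤ kappa2 k n ξ :=
  Real.sInf_nonneg fun _ ⟨_, _, hc⟩ => hc ▸ distOrigAffine_nonneg _

lemma mul_kappa2_le_kappa2_mul (ξ : Fin k → Fin n → ℝ) {z : Fin n → ℝ} {m : ℝ}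
    (hm0 : 0 ≤ m) (hm : ∀ j, m ≤ z j) :
    m * kappa2 k n ξ ≤ kappa2 k n (fun i => z * ξ i) := by
  refine mul_csInf_le_csInf hm0 (fun _ ⟨_, _, hc⟩ => hc ▸ distOrigAffine_nonneg _) ?_ ?_
  · rintro ⟨_, I, hI, -⟩
    exact ⟨_, I, hI, rfl⟩
  · rintro _ ⟨I, hI, rfl⟩
    refine ⟨_, ⟨I, hI, rfl⟩, ?_⟩
    simpa only [Set.image_image] using mul_distOrigAffine_le hm0 hm (ξ '' I)

end Kappa

theorem stmt13_general (d k : ℕ) (ξ : Fin k → (Fin d → ℝ))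
    (z : Fin d → ℝ) (hz : ∀ i, 0 < z i) :
    let δ : ℝ := (⨆ i, z i) / (⨅ i, z i)
    let zξ : Fin k → (Fin d → ℝ) := fun i j => z j * ξ i j
    euclNorm z * kappa1 k d ξ / (d * δ) ≤ kappa1 k d zξ ∧
    euclNorm z * kappa2 k d ξ / (Real.sqrt d * δ) ≤ kappa2 k d zξ := by
  intro δ zξ
  set m := ⨅ i, z i
  set M := ⨆ i, z i
  have hm0 : 0 ≤ m := Real.iInf_nonneg fun j => (hz j).le
  have hm : ∀ j, m ≤ z j := ciInf_le (Set.finite_range z).bddBelow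
  have hM0 : 0 ≤ M := Real.iSup_nonneg fun j => (hz j).le
  have hz_sqrt : euclNorm z ≤ Real.sqrt d * M := euclNorm_le_sqrt_card_mul hM0 fun j =>
    (abs_of_pos (hz j)).trans_le (le_ciSup (Set.finite_range z).bddAbove j)
  have hz_card : euclNorm z ≤ d * M :=
    hz_sqrt.trans (mul_le_mul_of_nonneg_right (sqrt_natCast_le_self d) hM0)
  constructor
  · calc euclNorm z * kappa1 k d ξ / (d * δ) = euclNorm z / (d * δ) * kappa1 k d ξ := by ring
      _ ≤ m * kappa1 k d ξ := mul_le_mul_of_nonneg_right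
          (div_mul_div_le_of_le_mul (euclNorm_nonneg z) hm0 hz_card) (kappa1_nonneg ξ)
      _ ≤ kappa1 k d zξ := mul_kappa1_le_kappa1_mul ξ hz hm0 hm
  · calc euclNorm z * kappa2 k d ξ / (Real.sqrt d * δ)
          = euclNorm z / (Real.sqrt d * δ) * kappa2 k d ξ := by ring
      _ ≤ m * kappa2 k d ξ := mul_le_mul_of_nonneg_right
          (div_mul_div_le_of_le_mul (euclNorm_nonneg z) hm0 hz_sqrt) (kappa2_nonneg ξ)
      _ ≤ kappa2 k d zξ := mul_kappa2_le_kappa2_mul ξ hm0 hm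

theorem stmt13 (d k : ℕ) (ξ : Fin k → (Fin d → ℝ))
    (hne : ∀ i, ξ i ≠ 0)
    -- (i): no d of the vectors are linearly dependent
    (hi : ∀ s : Finset (Fin k), s.card = d → LinearIndependent ℝ (fun i : s => ξ i))
    -- (ii): no ω has positive inner product with all the ξᵢ
    (hii : ¬ ∃ ω : Fin d → ℝ, ∀ i, 0 < dotp ω (ξ i))
    (z : Fin d → ℝ) (hz : ∀ i, 0 < z i) :
    let δ : ℝ := (⨆ i, z i) / (⨅ i, z i)
    let zξ : Fin k → (Fin d → ℝ) := fun i j => z j * ξ i j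
    euclNorm z * kappa1 k d ξ / (d * δ) ≤ kappa1 k d zξ ∧
    euclNorm z * kappa2 k d ξ / (Real.sqrt d * δ) ≤ kappa2 k d zξ :=
  stmt13_general d k ξ z hz
end
end

section
/- Let J = 2, let 0 < d_i < ρ < u_i for i = 1,2, and let f : ℝ_+² → ℝ be convex and sub-modular. Set κ = 1 − (ρ−d₁)/(u₁−d₁) − (ρ−d₂)/(u₂−d₂). If κ ≥ 0, then the reduced Bellman operator (𝓑f)(z₁,z₂) = min_{γ∈ℝ²} max_{ξ_i∈[d_i,u_i]} [f(ξ₁z₁,ξ₂z₂) − γ¹z₁(ξ₁−ρ) − γ²z₂(ξ₂−ρ)] equals ((ρ−d₁)/(u₁−d₁)) f(u₁z₁,d₂z₂) + ((ρ−d₂)/(u₂−d₂)) f(d₁z₁,u₂z₂) + κ f(d₁z₁,d₂z₂), with optimal strategy γ¹ = (f(u₁z₁,d₂z₂)−f(d₁z₁,d₂z₂))/(z₁(u₁−d₁)), γ² = (f(d₁z₁,u₂z₂)−f(d₁z₁,d₂z₂))/(z₂(u₂−d₂)). If κ ≤ 0, then (𝓑f)(z₁,z₂) = ((u₁−ρ)/(u₁−d₁))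 f(d₁z₁,u₂z₂) + ((u₂−ρ)/(u₂−d₂)) f(u₁z₁,d₂z₂) + |κ| f(u₁z₁,u₂z₂), with γ¹ = (f(u₁z₁,u₂z₂)−f(d₁z₁,u₂z₂))/(z₁(u₁−d₁)), γ² = (f(u₁z₁,u₂z₂)−f(u₁z₁,d₂z₂))/(z₂(u₂−d₂)). -/
/-!
For fixed `γ` the hedging error `ξ ↦ f(ξ₁z₁, ξ₂z₂) - Σ γⁱ zᵢ (ξᵢ - ρ)` is convex, so its
maximum over the rectangle `[d₁, u₁] × [d₂, u₂]` is attained at a corner. On the other hand, for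
any weights on points of the rectangle with mean `(ρ, ρ)` the hedge averages to zero, so the
expected payoff is a lower bound for the maximum, whatever `γ`. When `κ ≥ 0` the weights
`q₁, q₂, κ` (`qᵢ = (ρ - dᵢ)/(uᵢ - dᵢ)`) on `(u₁, d₂), (d₁, u₂), (d₁, d₂)` have mean `(ρ, ρ)`, and
the stated `γ` makes the hedging error equal at these three corners; by sub-modularity it is no
larger at `(u₁, u₂)`, so the lower bound is attained. When `κ ≤ 0` the same argument runs around
the corner `(u₁, u₂)`.
-/

open Set

theorem Icc_prod_Icc_eq_convexHull {𝕜 : Type*} [Field 𝕜] [LinearOrder 𝕜] [IsStrictOrderedRing 𝕜]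
    {a₁ b₁ a₂ b₂ : 𝕜} (h₁ : a₁ ≤ b₁) (h₂ : a₂ ≤ b₂) :
    Icc a₁ b₁ ×ˢ Icc a₂ b₂ = convexHull 𝕜 ({a₁, b₁} ×ˢ {a₂, b₂}) := by
  rw [convexHull_prod, convexHull_pair, convexHull_pair, segment_eq_Icc h₁, segment_eq_Icc h₂]

theorem ConvexOn.le_of_mem_Icc_prod_Icc {𝕜 β : Type*} [Field 𝕜] [LinearOrder 𝕜]
    [IsStrictOrderedRing 𝕜] [AddCommGroup β] [LinearOrder β] [IsOrderedAddMonoid β] [Module 𝕜 β]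
    [IsStrictOrderedModule 𝕜 β] {s : Set (𝕜 × 𝕜)} {g : 𝕜 × 𝕜 → β} {a₁ b₁ a₂ b₂ : 𝕜} {M : β}
    (hg : ConvexOn 𝕜 s g) (hs : Icc a₁ b₁ ×ˢ Icc a₂ b₂ ⊆ s)
    (haa : g (a₁, a₂) ≤ M) (hab : g (a₁, b₂) ≤ M) (hba : g (b₁, a₂) ≤ M) (hbb : g (b₁, b₂) ≤ M)
    {ξ : 𝕜 × 𝕜} (hξ : ξ ∈ Icc a₁ b₁ ×ˢ Icc a₂ b₂) : g ξ ≤ M := by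
  have hR := Icc_prod_Icc_eq_convexHull (hξ.1.1.trans hξ.1.2) (hξ.2.1.trans hξ.2.2)
  rw [hR] at hξ hs
  obtain ⟨c, hc, hξc⟩ := hg.exists_ge_of_mem_convexHull ((subset_convexHull 𝕜 _).trans hs) hξ
  obtain ⟨rfl | rfl, rfl | rfl⟩ := hc <;> order

def hedgeError (f : ℝ × ℝ → ℝ) (ρ z₁ z₂ : ℝ) (γ ξ : ℝ × ℝ) : ℝ :=
  f (ξ.1 * z₁, ξ.2 * z₂) - γ.1 * z₁ * (ξ.1 - ρ) - γ.2 * z₂ * (ξ.2 - ρ)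

/-- The inner maximum of the reduced Bellman operator `𝓑f(z₁, z₂)`, as a function of the
strategy `γ`; `𝓑f(z₁, z₂)` is the least element of its range. -/
noncomputable def maxHedgeError (f : ℝ × ℝ → ℝ) (ρ d₁ d₂ u₁ u₂ z₁ z₂ : ℝ) (γ : ℝ × ℝ) : ℝ :=
  ⨆ ξ : {ξ : ℝ × ℝ // ξ.1 ∈ Icc d₁ u₁ ∧ ξ.2 ∈ Icc d₂ u₂}, hedgeError f ρ z₁ z₂ γ ξ

section Bellman

variable {f : ℝ × ℝ → ℝ} {ρ d₁ d₂ u₁ u₂ z₁ z₂ : ℝ}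

theorem convexOn_hedgeError (hf : ConvexOn ℝ (Ici 0 ×ˢ Ici 0) f) (hz₁ : 0 ≤ z₁) (hz₂ : 0 ≤ z₂)
    (γ : ℝ × ℝ) : ConvexOn ℝ (Ici 0 ×ˢ Ici 0) (hedgeError f ρ z₁ z₂ γ) := by
  refine ⟨hf.1, fun x hx y hy a b ha hb hab => ?_⟩
  have hscale : ∀ ξ ∈ Ici (0 : ℝ) ×ˢ Ici 0, (ξ.1 * z₁, ξ.2 * z₂) ∈ Ici (0 : ℝ) ×ˢ Ici 0 :=
    fun ξ hξ => ⟨mul_nonneg hξ.1 hz₁, mul_nonneg hξ.2 hz₂⟩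
  have key := hf.2 (hscale x hx) (hscale y hy) ha hb hab
  obtain rfl : b = 1 - a := by linarith
  simp only [hedgeError, Prod.smul_mk, Prod.mk_add_mk, Prod.smul_fst, Prod.smul_snd, Prod.fst_add,
    Prod.snd_add, smul_eq_mul] at key ⊢
  ring_nf at key ⊢
  linarith

theorem hedgeError_mixed_sub (γ : ℝ × ℝ) (x₁ x₂ y₁ y₂ : ℝ) :
    hedgeError f ρ z₁ z₂ γ (x₁, x₂) + hedgeError f ρ z₁ z₂ γ (y₁, y₂)
      - hedgeError f ρ z₁ z₂ γ (x₁, y₂) - hedgeError f ρ z₁ z₂ γ (y₁, x₂) =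
    f (x₁ * z₁, x₂ * z₂) + f (y₁ * z₁, y₂ * z₂) - f (x₁ * z₁, y₂ * z₂) - f (y₁ * z₁, x₂ * z₂) := by
  simp only [hedgeError]
  ring

theorem hedgeError_le_of_corners (hf : ConvexOn ℝ (Ici 0 ×ˢ Ici 0) f) (hd₁ : 0 ≤ d₁)
    (hd₂ : 0 ≤ d₂) (hz₁ : 0 ≤ z₁) (hz₂ : 0 ≤ z₂) {γ : ℝ × ℝ} {M : ℝ}
    (hdd : hedgeError f ρ z₁ z₂ γ (d₁, d₂) ≤ M) (hdu : hedgeError f ρ z₁ z₂ γ (d₁, u₂) ≤ M)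
    (hud : hedgeError f ρ z₁ z₂ γ (u₁, d₂) ≤ M) (huu : hedgeError f ρ z₁ z₂ γ (u₁, u₂) ≤ M)
    {ξ : ℝ × ℝ} (hξ : ξ.1 ∈ Icc d₁ u₁ ∧ ξ.2 ∈ Icc d₂ u₂) : hedgeError f ρ z₁ z₂ γ ξ ≤ M :=
  (convexOn_hedgeError hf hz₁ hz₂ γ).le_of_mem_Icc_prod_Icc
    (fun _ hη => ⟨hd₁.trans hη.1.1, hd₂.trans hη.2.1⟩) hdd hdu hud huu hξ

theorem maxHedgeError_le_of_corners (hf : ConvexOn ℝ (Ici 0 ×ˢ Ici 0) f) (hd₁ : 0 ≤ d₁)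
    (hd₂ : 0 ≤ d₂) (hz₁ : 0 ≤ z₁) (hz₂ : 0 ≤ z₂) (hdu₁ : d₁ ≤ u₁) (hdu₂ : d₂ ≤ u₂)
    {γ : ℝ × ℝ} {M : ℝ}
    (hdd : hedgeError f ρ z₁ z₂ γ (d₁, d₂) ≤ M) (hdu : hedgeError f ρ z₁ z₂ γ (d₁, u₂) ≤ M)
    (hud : hedgeError f ρ z₁ z₂ γ (u₁, d₂) ≤ M) (huu : hedgeError f ρ z₁ z₂ γ (u₁, u₂) ≤ M) :
    maxHedgeError f ρ d₁ d₂ u₁ u₂ z₁ z₂ γ ≤ M :=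
  have : Nonempty {ξ : ℝ × ℝ // ξ.1 ∈ Icc d₁ u₁ ∧ ξ.2 ∈ Icc d₂ u₂} :=
    ⟨⟨(d₁, d₂), left_mem_Icc.2 hdu₁, left_mem_Icc.2 hdu₂⟩⟩
  ciSup_le fun ξ => hedgeError_le_of_corners hf hd₁ hd₂ hz₁ hz₂ hdd hdu hud huu ξ.2

theorem hedgeError_le_maxHedgeError (hf : ConvexOn ℝ (Ici 0 ×ˢ Ici 0) f) (hd₁ : 0 ≤ d₁)
    (hd₂ : 0 ≤ d₂) (hz₁ : 0 ≤ z₁) (hz₂ : 0 ≤ z₂) (γ : ℝ × ℝ) {ξ : ℝ × ℝ}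
    (hξ : ξ.1 ∈ Icc d₁ u₁ ∧ ξ.2 ∈ Icc d₂ u₂) :
    hedgeError f ρ z₁ z₂ γ ξ ≤ maxHedgeError f ρ d₁ d₂ u₁ u₂ z₁ z₂ γ := by
  set e := hedgeError f ρ z₁ z₂ γ
  refine le_ciSup (f := fun η : {ξ : ℝ × ℝ // ξ.1 ∈ Icc d₁ u₁ ∧ ξ.2 ∈ Icc d₂ u₂} => e η)
    ⟨max (max (e (d₁, d₂)) (e (d₁, u₂))) (max (e (u₁, d₂)) (e (u₁, u₂))), ?_⟩ ⟨ξ, hξ⟩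
  rintro _ ⟨η, rfl⟩
  exact hedgeError_le_of_corners hf hd₁ hd₂ hz₁ hz₂
    (by simp [e]) (by simp [e]) (by simp [e]) (by simp [e]) η.2

theorem hedgeError_martingale_combination {ξ η ζ : ℝ × ℝ} {p q r : ℝ} (hpqr : p + q + r = 1)
    (hmean₁ : p * ξ.1 + q * η.1 + r * ζ.1 = ρ) (hmean₂ : p * ξ.2 + q * η.2 + r * ζ.2 = ρ)
    (γ : ℝ × ℝ) :
    p * hedgeError f ρ z₁ z₂ γ ξ + q * hedgeError f ρ z₁ z₂ γ η + r * hedgeError f ρ z₁ z₂ γ ζ =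
      p * f (ξ.1 * z₁, ξ.2 * z₂) + q * f (η.1 * z₁, η.2 * z₂) + r * f (ζ.1 * z₁, ζ.2 * z₂) := by
  simp only [hedgeError]
  linear_combination (γ.1 * z₁ + γ.2 * z₂) * ρ * hpqr - γ.1 * z₁ * hmean₁ - γ.2 * z₂ * hmean₂

theorem martingale_combination_le_maxHedgeError (hf : ConvexOn ℝ (Ici 0 ×ˢ Ici 0) f)
    (hd₁ : 0 ≤ d₁) (hd₂ : 0 ≤ d₂) (hz₁ : 0 ≤ z₁) (hz₂ : 0 ≤ z₂) {ξ η ζ : ℝ × ℝ}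
    (hξ : ξ.1 ∈ Icc d₁ u₁ ∧ ξ.2 ∈ Icc d₂ u₂) (hη : η.1 ∈ Icc d₁ u₁ ∧ η.2 ∈ Icc d₂ u₂)
    (hζ : ζ.1 ∈ Icc d₁ u₁ ∧ ζ.2 ∈ Icc d₂ u₂) {p q r : ℝ} (hp : 0 ≤ p) (hq : 0 ≤ q) (hr : 0 ≤ r)
    (hpqr : p + q + r = 1) (hmean₁ : p * ξ.1 + q * η.1 + r * ζ.1 = ρ)
    (hmean₂ : p * ξ.2 + q * η.2 + r * ζ.2 = ρ) (γ : ℝ × ℝ) :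
    p * f (ξ.1 * z₁, ξ.2 * z₂) + q * f (η.1 * z₁, η.2 * z₂) + r * f (ζ.1 * z₁, ζ.2 * z₂) ≤
      maxHedgeError f ρ d₁ d₂ u₁ u₂ z₁ z₂ γ := by
  rw [← hedgeError_martingale_combination hpqr hmean₁ hmean₂ γ]
  have hξ' := hedgeError_le_maxHedgeError (ρ := ρ) hf hd₁ hd₂ hz₁ hz₂ γ hξ
  have hη' := hedgeError_le_maxHedgeError (ρ := ρ) hf hd₁ hd₂ hz₁ hz₂ γ hη
  have hζ' := hedgeError_le_maxHedgeError (ρ := ρ) hf hd₁ hd₂ hz₁ hz₂ γ hζ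
  linear_combination p * hξ' + q * hη' + r * hζ' + maxHedgeError f ρ d₁ d₂ u₁ u₂ z₁ z₂ γ * hpqr

theorem hedgeError_eq_of_fst_eq_slope {γ : ℝ × ℝ} {x₁ y₁ x₂ : ℝ} (hz₁ : z₁ ≠ 0) (hxy : x₁ ≠ y₁)
    (hγ : γ.1 = (f (y₁ * z₁, x₂ * z₂) - f (x₁ * z₁, x₂ * z₂)) / (z₁ * (y₁ - x₁))) :
    hedgeError f ρ z₁ z₂ γ (y₁, x₂) = hedgeError f ρ z₁ z₂ γ (x₁, x₂) := by
  have hslope : γ.1 * z₁ * (y₁ - x₁) = f (y₁ * z₁, x₂ * z₂) - f (x₁ * z₁, x₂ * z₂) := by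
    rw [hγ, mul_assoc, div_mul_cancel₀ _ (mul_ne_zero hz₁ (sub_ne_zero.2 hxy.symm))]
  simp only [hedgeError]
  linear_combination -hslope

theorem hedgeError_eq_of_snd_eq_slope {γ : ℝ × ℝ} {x₁ x₂ y₂ : ℝ} (hz₂ : z₂ ≠ 0) (hxy : x₂ ≠ y₂)
    (hγ : γ.2 = (f (x₁ * z₁, y₂ * z₂) - f (x₁ * z₁, x₂ * z₂)) / (z₂ * (y₂ - x₂))) :
    hedgeError f ρ z₁ z₂ γ (x₁, y₂) = hedgeError f ρ z₁ z₂ γ (x₁, x₂) := by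
  have hslope : γ.2 * z₂ * (y₂ - x₂) = f (x₁ * z₁, y₂ * z₂) - f (x₁ * z₁, x₂ * z₂) := by
    rw [hγ, mul_assoc, div_mul_cancel₀ _ (mul_ne_zero hz₂ (sub_ne_zero.2 hxy.symm))]
  simp only [hedgeError]
  linear_combination -hslope

/-- Minimax certificate: a martingale measure on three points of the rectangle, at which `γ`
equalizes the hedging error. -/
theorem isLeast_range_maxHedgeError (hf : ConvexOn ℝ (Ici 0 ×ˢ Ici 0) f)
    (hd₁ : 0 ≤ d₁) (hd₂ : 0 ≤ d₂) (hz₁ : 0 ≤ z₁) (hz₂ : 0 ≤ z₂) {ξ η ζ : ℝ × ℝ}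
    (hξ : ξ.1 ∈ Icc d₁ u₁ ∧ ξ.2 ∈ Icc d₂ u₂) (hη : η.1 ∈ Icc d₁ u₁ ∧ η.2 ∈ Icc d₂ u₂)
    (hζ : ζ.1 ∈ Icc d₁ u₁ ∧ ζ.2 ∈ Icc d₂ u₂) {p q r : ℝ} (hp : 0 ≤ p) (hq : 0 ≤ q) (hr : 0 ≤ r)
    (hpqr : p + q + r = 1) (hmean₁ : p * ξ.1 + q * η.1 + r * ζ.1 = ρ)
    (hmean₂ : p * ξ.2 + q * η.2 + r * ζ.2 = ρ) {γ : ℝ × ℝ} {c : ℝ}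
    (hγ : maxHedgeError f ρ d₁ d₂ u₁ u₂ z₁ z₂ γ ≤ c) (hγξ : hedgeError f ρ z₁ z₂ γ ξ = c)
    (hγη : hedgeError f ρ z₁ z₂ γ η = c) (hγζ : hedgeError f ρ z₁ z₂ γ ζ = c) :
    IsLeast (range (maxHedgeError f ρ d₁ d₂ u₁ u₂ z₁ z₂))
      (p * f (ξ.1 * z₁, ξ.2 * z₂) + q * f (η.1 * z₁, η.2 * z₂) + r * f (ζ.1 * z₁, ζ.2 * z₂)) ∧
    maxHedgeError f ρ d₁ d₂ u₁ u₂ z₁ z₂ γ =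
      p * f (ξ.1 * z₁, ξ.2 * z₂) + q * f (η.1 * z₁, η.2 * z₂) + r * f (ζ.1 * z₁, ζ.2 * z₂) := by
  have hlow := martingale_combination_le_maxHedgeError hf hd₁ hd₂ hz₁ hz₂ hξ hη hζ hp hq hr
    hpqr hmean₁ hmean₂
  have hval : p * f (ξ.1 * z₁, ξ.2 * z₂) + q * f (η.1 * z₁, η.2 * z₂) +
      r * f (ζ.1 * z₁, ζ.2 * z₂) = c := by
    rw [← hedgeError_martingale_combination hpqr hmean₁ hmean₂ γ, hγξ, hγη, hγζ,
      ← add_mul, ← add_mul, hpqr, one_mul]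
  have hmin := le_antisymm (hγ.trans hval.ge) (hlow γ)
  exact ⟨⟨⟨γ, hmin⟩, forall_mem_range.2 hlow⟩, hmin⟩

theorem isLeast_range_maxHedgeError_of_sum_le_one (hf : ConvexOn ℝ (Ici 0 ×ˢ Ici 0) f)
    (hd₁ : 0 ≤ d₁) (hd₂ : 0 ≤ d₂) (hρ₁ : d₁ ≤ ρ) (hρ₂ : d₂ ≤ ρ) (hdu₁ : d₁ < u₁) (hdu₂ : d₂ < u₂)
    (hz₁ : 0 < z₁) (hz₂ : 0 < z₂)
    (hsub : f (d₁ * z₁, d₂ * z₂) + f (u₁ * z₁, u₂ * z₂) ≤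
      f (d₁ * z₁, u₂ * z₂) + f (u₁ * z₁, d₂ * z₂))
    (hκ : 0 ≤ 1 - (ρ - d₁) / (u₁ - d₁) - (ρ - d₂) / (u₂ - d₂)) :
    IsLeast (range (maxHedgeError f ρ d₁ d₂ u₁ u₂ z₁ z₂))
      ((ρ - d₁) / (u₁ - d₁) * f (u₁ * z₁, d₂ * z₂) + (ρ - d₂) / (u₂ - d₂) * f (d₁ * z₁, u₂ * z₂) +
        (1 - (ρ - d₁) / (u₁ - d₁) - (ρ - d₂) / (u₂ - d₂)) * f (d₁ * z₁, d₂ * z₂)) ∧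
    maxHedgeError f ρ d₁ d₂ u₁ u₂ z₁ z₂
      ((f (u₁ * z₁, d₂ * z₂) - f (d₁ * z₁, d₂ * z₂)) / (z₁ * (u₁ - d₁)),
        (f (d₁ * z₁, u₂ * z₂) - f (d₁ * z₁, d₂ * z₂)) / (z₂ * (u₂ - d₂))) =
      (ρ - d₁) / (u₁ - d₁) * f (u₁ * z₁, d₂ * z₂) + (ρ - d₂) / (u₂ - d₂) * f (d₁ * z₁, u₂ * z₂) +
        (1 - (ρ - d₁) / (u₁ - d₁) - (ρ - d₂) / (u₂ - d₂)) * f (d₁ * z₁, d₂ * z₂) := by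
  set γ : ℝ × ℝ := ((f (u₁ * z₁, d₂ * z₂) - f (d₁ * z₁, d₂ * z₂)) / (z₁ * (u₁ - d₁)),
    (f (d₁ * z₁, u₂ * z₂) - f (d₁ * z₁, d₂ * z₂)) / (z₂ * (u₂ - d₂)))
  set e := hedgeError f ρ z₁ z₂ γ
  have hud : e (u₁, d₂) = e (d₁, d₂) :=
    hedgeError_eq_of_fst_eq_slope hz₁.ne' hdu₁.ne rfl
  have hdu : e (d₁, u₂) = e (d₁, d₂) :=
    hedgeError_eq_of_snd_eq_slope hz₂.ne' hdu₂.ne rfl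
  have huu : e (u₁, u₂) ≤ e (d₁, d₂) := by
    have := hedgeError_mixed_sub (f := f) (ρ := ρ) (z₁ := z₁) (z₂ := z₂) γ d₁ d₂ u₁ u₂
    linarith
  have hu₁ : u₁ - d₁ ≠ 0 := (sub_pos.2 hdu₁).ne'
  have hu₂ : u₂ - d₂ ≠ 0 := (sub_pos.2 hdu₂).ne'
  exact isLeast_range_maxHedgeError (ξ := (u₁, d₂)) (η := (d₁, u₂)) (ζ := (d₁, d₂))
    hf hd₁ hd₂ hz₁.le hz₂.le ⟨right_mem_Icc.2 hdu₁.le, left_mem_Icc.2 hdu₂.le⟩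
    ⟨left_mem_Icc.2 hdu₁.le, right_mem_Icc.2 hdu₂.le⟩
    ⟨left_mem_Icc.2 hdu₁.le, left_mem_Icc.2 hdu₂.le⟩
    (div_nonneg (sub_nonneg.2 hρ₁) (sub_pos.2 hdu₁).le)
    (div_nonneg (sub_nonneg.2 hρ₂) (sub_pos.2 hdu₂).le) hκ (by ring)
    (by field_simp; ring) (by field_simp; ring)
    (maxHedgeError_le_of_corners hf hd₁ hd₂ hz₁.le hz₂.le hdu₁.le hdu₂.le le_rfl hdu.le hud.le huu)
    hud hdu rfl

theorem isLeast_range_maxHedgeError_of_one_le_sum (hf : ConvexOn ℝ (Ici 0 ×ˢ Ici 0) f)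
    (hd₁ : 0 ≤ d₁) (hd₂ : 0 ≤ d₂) (hρ₁ : ρ ≤ u₁) (hρ₂ : ρ ≤ u₂) (hdu₁ : d₁ < u₁) (hdu₂ : d₂ < u₂)
    (hz₁ : 0 < z₁) (hz₂ : 0 < z₂)
    (hsub : f (d₁ * z₁, d₂ * z₂) + f (u₁ * z₁, u₂ * z₂) ≤
      f (d₁ * z₁, u₂ * z₂) + f (u₁ * z₁, d₂ * z₂))
    (hκ : 1 - (ρ - d₁) / (u₁ - d₁) - (ρ - d₂) / (u₂ - d₂) ≤ 0) :
    IsLeast (range (maxHedgeError f ρ d₁ d₂ u₁ u₂ z₁ z₂))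
      ((u₁ - ρ) / (u₁ - d₁) * f (d₁ * z₁, u₂ * z₂) + (u₂ - ρ) / (u₂ - d₂) * f (u₁ * z₁, d₂ * z₂) +
        |1 - (ρ - d₁) / (u₁ - d₁) - (ρ - d₂) / (u₂ - d₂)| * f (u₁ * z₁, u₂ * z₂)) ∧
    maxHedgeError f ρ d₁ d₂ u₁ u₂ z₁ z₂
      ((f (u₁ * z₁, u₂ * z₂) - f (d₁ * z₁, u₂ * z₂)) / (z₁ * (u₁ - d₁)),
        (f (u₁ * z₁, u₂ * z₂) - f (u₁ * z₁, d₂ * z₂)) / (z₂ * (u₂ - d₂))) =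
      (u₁ - ρ) / (u₁ - d₁) * f (d₁ * z₁, u₂ * z₂) + (u₂ - ρ) / (u₂ - d₂) * f (u₁ * z₁, d₂ * z₂) +
        |1 - (ρ - d₁) / (u₁ - d₁) - (ρ - d₂) / (u₂ - d₂)| * f (u₁ * z₁, u₂ * z₂) := by
  set γ : ℝ × ℝ := ((f (u₁ * z₁, u₂ * z₂) - f (d₁ * z₁, u₂ * z₂)) / (z₁ * (u₁ - d₁)),
    (f (u₁ * z₁, u₂ * z₂) - f (u₁ * z₁, d₂ * z₂)) / (z₂ * (u₂ - d₂)))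
  set e := hedgeError f ρ z₁ z₂ γ
  have hdu : e (u₁, u₂) = e (d₁, u₂) :=
    hedgeError_eq_of_fst_eq_slope hz₁.ne' hdu₁.ne rfl
  have hud : e (u₁, u₂) = e (u₁, d₂) :=
    hedgeError_eq_of_snd_eq_slope hz₂.ne' hdu₂.ne rfl
  have hdd : e (d₁, d₂) ≤ e (u₁, u₂) := by
    have := hedgeError_mixed_sub (f := f) (ρ := ρ) (z₁ := z₁) (z₂ := z₂) γ d₁ d₂ u₁ u₂
    linarith
  have hu₁ : u₁ - d₁ ≠ 0 := (sub_pos.2 hdu₁).ne'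
  have hu₂ : u₂ - d₂ ≠ 0 := (sub_pos.2 hdu₂).ne'
  rw [abs_of_nonpos hκ]
  exact isLeast_range_maxHedgeError (ξ := (d₁, u₂)) (η := (u₁, d₂)) (ζ := (u₁, u₂))
    hf hd₁ hd₂ hz₁.le hz₂.le ⟨left_mem_Icc.2 hdu₁.le, right_mem_Icc.2 hdu₂.le⟩
    ⟨right_mem_Icc.2 hdu₁.le, left_mem_Icc.2 hdu₂.le⟩
    ⟨right_mem_Icc.2 hdu₁.le, right_mem_Icc.2 hdu₂.le⟩
    (div_nonneg (sub_nonneg.2 hρ₁) (sub_pos.2 hdu₁).le)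
    (div_nonneg (sub_nonneg.2 hρ₂) (sub_pos.2 hdu₂).le) (neg_nonneg.2 hκ)
    (by field_simp; ring) (by field_simp; ring) (by field_simp; ring)
    (maxHedgeError_le_of_corners hf hd₁ hd₂ hz₁.le hz₂.le hdu₁.le hdu₂.le hdd hdu.ge hud.ge le_rfl)
    hdu.symm hud.symm rfl

end Bellman

theorem stmt16 (ρ d₁ d₂ u₁ u₂ : ℝ)
    (hd₁ : 0 < d₁) (hd₂ : 0 < d₂) (h₁ : d₁ < ρ) (h₂ : d₂ < ρ)
    (h₃ : ρ < u₁) (h₄ : ρ < u₂)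
    (f : ℝ × ℝ → ℝ)
    (hconv : ConvexOn ℝ (Set.Ici (0 : ℝ) ×ˢ Set.Ici (0 : ℝ)) f)
    -- f is sub-modular
    (hsub : ∀ x₁ y₁ x₂ y₂ : ℝ, 0 ≤ x₁ → x₁ ≤ y₁ → 0 ≤ x₂ → x₂ ≤ y₂ →
      f (x₁, x₂) + f (y₁, y₂) ≤ f (x₁, y₂) + f (y₁, x₂))
    (z₁ z₂ : ℝ) (hz₁ : 0 < z₁) (hz₂ : 0 < z₂) :
    let F : ℝ × ℝ → ℝ := fun γ =>
      ⨆ ξ : { ξ : ℝ × ℝ // ξ.1 ∈ Set.Icc d₁ u₁ ∧ ξ.2 ∈ Set.Icc d₂ u₂ },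
        (f (ξ.1.1 * z₁, ξ.1.2 * z₂) - γ.1 * z₁ * (ξ.1.1 - ρ) - γ.2 * z₂ * (ξ.1.2 - ρ))
    let κ : ℝ := 1 - (ρ - d₁) / (u₁ - d₁) - (ρ - d₂) / (u₂ - d₂)
    -- case κ ≥ 0
    (0 ≤ κ →
      (IsLeast (Set.range F)
        (((ρ - d₁) / (u₁ - d₁)) * f (u₁ * z₁, d₂ * z₂) +
         ((ρ - d₂) / (u₂ - d₂)) * f (d₁ * z₁, u₂ * z₂) + κ * f (d₁ * z₁, d₂ * z₂)) ∧
       F ((f (u₁ * z₁, d₂ * z₂) - f (d₁ * z₁, d₂ * z₂)) / (z₁ * (u₁ - d₁)),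
          (f (d₁ * z₁, u₂ * z₂) - f (d₁ * z₁, d₂ * z₂)) / (z₂ * (u₂ - d₂))) =
        ((ρ - d₁) / (u₁ - d₁)) * f (u₁ * z₁, d₂ * z₂) +
         ((ρ - d₂) / (u₂ - d₂)) * f (d₁ * z₁, u₂ * z₂) + κ * f (d₁ * z₁, d₂ * z₂))) ∧
    -- case κ ≤ 0
    (κ ≤ 0 →
      (IsLeast (Set.range F)
        (((u₁ - ρ) / (u₁ - d₁)) * f (d₁ * z₁, u₂ * z₂) +
         ((u₂ - ρ) / (u₂ - d₂)) * f (u₁ * z₁, d₂ * z₂) + |κ| * f (u₁ * z₁, u₂ * z₂)) ∧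
       F ((f (u₁ * z₁, u₂ * z₂) - f (d₁ * z₁, u₂ * z₂)) / (z₁ * (u₁ - d₁)),
          (f (u₁ * z₁, u₂ * z₂) - f (u₁ * z₁, d₂ * z₂)) / (z₂ * (u₂ - d₂))) =
        ((u₁ - ρ) / (u₁ - d₁)) * f (d₁ * z₁, u₂ * z₂) +
         ((u₂ - ρ) / (u₂ - d₂)) * f (u₁ * z₁, d₂ * z₂) + |κ| * f (u₁ * z₁, u₂ * z₂))) := by
  intro F κ
  have hdu₁ : d₁ < u₁ := h₁.trans h₃
  have hdu₂ : d₂ < u₂ := h₂.trans h₄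
  have hsub_corners := hsub (d₁ * z₁) (u₁ * z₁) (d₂ * z₂) (u₂ * z₂) (by positivity)
    (by gcongr) (by positivity) (by gcongr)
  exact ⟨isLeast_range_maxHedgeError_of_sum_le_one hconv hd₁.le hd₂.le h₁.le h₂.le hdu₁ hdu₂ hz₁ hz₂
      hsub_corners,
    isLeast_range_maxHedgeError_of_one_le_sum hconv hd₁.le hd₂.le h₃.le h₄.le hdu₁ hdu₂ hz₁ hz₂
      hsub_corners⟩
end
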